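/- Let p = 8k - 1 be prime. Then the chromatic number of the graph G(p+2, 3, 2) equals exactly p. -/

import Mathlib

def knGraph (n : ℕ) : SimpleGraph {s : Finset (Fin n) // s.card = 3} :=
  SimpleGraph.fromRel (fun x y => (x.val ∩ y.val).card = 2)

/-!
Lower bound: two distinct triples sharing a pair are adjacent, so a colour class contains each
pair at most once and has at most `C(n,2) / 3` triples; `C(n,3)` triples then need `n - 2`
colours.

Upper bound: write the `q + 2` points as `F ⊕ Bool` for a finite field `F` of order `q` in which
`-1` is a nonsquare and `2` a square (for `F = ZMod p` this is `p ≡ 7 mod 8`). A triple is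
coloured by the sum of its points, the extra point `inr true` (resp. `inr false`) counting as
the winner (resp. loser) of the other points in the Paley tournament. For a fixed pair the
colour is then injective in the third point; the essential case is that `d ↦ d` or `2 d`,
chosen by the square class of `d`, is injective because `2` is a square.
-/

open Finset

namespace Finset

variable {α β : Type*}

@[simp] theorem toLeft_singleton_inl (a : α) : ({.inl a} : Finset (α ⊕ β)).toLeft = {a} := by
  ext; simp

@[simp] theorem toLeft_singleton_inr (b : β) : ({.inr b} : Finset (α ⊕ β)).toLeft = ∅ := by
  ext; simp

@[simp] theorem toRight_singleton_inl (a : α) : ({.inl a} : Finset (α ⊕ β)).toRight = ∅ := by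
  ext; simp

@[simp] theorem toRight_singleton_inr (b : β) : ({.inr b} : Finset (α ⊕ β)).toRight = {b} := by
  ext; simp

end Finset

section SquareClasses

variable {F : Type*} [Field F]

theorem isSquare_mul_iff_of_isSquare {a d : F} (ha : IsSquare a) (ha0 : a ≠ 0) :
    IsSquare (a * d) ↔ IsSquare d :=
  ⟨fun h ↦ by simpa [ha0] using h.div ha, ha.mul⟩

theorem two_ne_zero_of_not_isSquare_neg_one (h : ¬IsSquare (-1 : F)) : (2 : F) ≠ 0 := by
  intro h2
  refine h ⟨1, ?_⟩
  linear_combination -h2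

theorem isSquare_sub_comm_iff_not [Fintype F] (h : ¬IsSquare (-1 : F)) {x y : F}
    (hxy : x ≠ y) : IsSquare (y - x) ↔ ¬IsSquare (x - y) := by
  classical
  rw [← quadraticChar_one_iff_isSquare (sub_ne_zero.2 hxy.symm),
    ← quadraticChar_neg_one_iff_not_isSquare, ← neg_sub, neg_eq_neg_one_mul, map_mul,
    quadraticChar_neg_one_iff_not_isSquare.2 h]
  constructor <;> intro hχ <;> linarith

end SquareClasses

theorem knGraph_adj {n : ℕ} {v w : {s : Finset (Fin n) // s.card = 3}} :
    (knGraph n).Adj v w ↔ v ≠ w ∧ #(v.val ∩ w.val) = 2 := by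
  rw [knGraph, SimpleGraph.fromRel_adj, inter_comm w.val, or_self]

theorem knGraph_colorable_of_injOn {n : ℕ} {β C : Type*} [DecidableEq β] [Fintype C]
    (e : Fin n ≃ β) (c : Finset β → C)
    (hc : ∀ P : Finset β, #P = 2 → Set.InjOn (fun a ↦ c (insert a P)) (↑P)ᶜ) :
    (knGraph n).Colorable (Fintype.card C) := by
  refine (SimpleGraph.Coloring.mk (fun v ↦ c (v.val.map e.toEmbedding)) ?_).colorable
  intro v w hvw hc_eq
  rw [knGraph_adj] at hvw
  set P := (v.val ∩ w.val).map e.toEmbedding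
  have hP : #P = 2 := by rw [card_map, hvw.2]
  have hinsert (u : {s : Finset (Fin n) // s.card = 3}) (hu : v.val ∩ w.val ⊆ u.val) :
      ∃ a ∉ P, insert a P = u.val.map e.toEmbedding :=
    exists_eq_insert_iff.2 ⟨map_subset_map.2 hu, by rw [card_map, card_map, hvw.2, u.2]⟩
  obtain ⟨a, ha, hav⟩ := hinsert v inter_subset_left
  obtain ⟨b, hb, hbw⟩ := hinsert w inter_subset_right
  rw [← hav, ← hbw] at hc_eq
  have hab : a = b := hc P hP ha hb hc_eq
  exact hvw.1 (Subtype.ext (map_injective e.toEmbedding (by rw [← hav, ← hbw, hab])))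

theorem three_mul_card_le_choose_two_of_isIndepSet {n : ℕ}
    {S : Finset {s : Finset (Fin n) // s.card = 3}} (hS : (knGraph n).IsIndepSet S) :
    3 * #S ≤ n.choose 2 := by
  have hdisj : (S : Set {s : Finset (Fin n) // s.card = 3}).PairwiseDisjoint
      (fun v ↦ v.val.powersetCard 2) := by
    intro v hv w hw hvw
    rw [Function.onFun, disjoint_left]
    intro t htv htw
    rw [mem_powersetCard] at htv htw
    have h2 : 2 ≤ #(v.val ∩ w.val) := htv.2 ▸ card_le_card (subset_inter htv.1 htw.1)
    have h3 : #(v.val ∩ w.val) ≠ 3 := by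
      intro h3
      have hv' : v.val ∩ w.val = v.val :=
        eq_of_subset_of_card_le inter_subset_left (by rw [h3, v.2])
      have hw' : v.val ∩ w.val = w.val :=
        eq_of_subset_of_card_le inter_subset_right (by rw [h3, w.2])
      exact hvw (Subtype.ext (hv'.symm.trans hw'))
    have hle : #(v.val ∩ w.val) ≤ 3 := (card_le_card inter_subset_left).trans_eq v.2
    exact hS hv hw hvw (knGraph_adj.2 ⟨hvw, by omega⟩)
  calc 3 * #S = #(S.biUnion fun v ↦ v.val.powersetCard 2) := by
        rw [card_biUnion hdisj, mul_comm,
          sum_const_nat (m := 3) fun v _ ↦ by rw [card_powersetCard, v.2]; rfl]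
    _ ≤ #((univ : Finset (Fin n)).powersetCard 2) :=
        card_le_card fun t ht ↦ by
          obtain ⟨v, -, htv⟩ := mem_biUnion.1 ht
          exact mem_powersetCard.2 ⟨subset_univ t, (mem_powersetCard.1 htv).2⟩
    _ = n.choose 2 := by simp

theorem knGraph_sub_two_le_of_colorable {n m : ℕ} (h : (knGraph n).Colorable m) :
    n - 2 ≤ m := by
  obtain ⟨C⟩ := h
  have hcount : 3 * n.choose 3 ≤ m * n.choose 2 := by
    calc 3 * n.choose 3 = ∑ i : Fin m, 3 * #{v | C v = i} := by
          rw [← mul_sum, ← card_eq_sum_card_fiberwise (fun v _ ↦ mem_univ (C v)), card_univ,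
            Fintype.card_finset_len, Fintype.card_fin]
      _ ≤ ∑ _i : Fin m, n.choose 2 := sum_le_sum fun i _ ↦
          three_mul_card_le_choose_two_of_isIndepSet
            (by simpa [SimpleGraph.Coloring.colorClass] using C.isIndepSet_colorClass i)
      _ = m * n.choose 2 := by simp
  rcases lt_or_ge n 2 with hn | hn
  · omega
  · refine Nat.le_of_mul_le_mul_right ?_ (Nat.choose_pos hn)
    rwa [mul_comm (n - 2), ← Nat.choose_succ_right_eq, mul_comm]

section Paley

open scoped Classical

variable {F : Type*} [Field F]

/-- In the Paley tournament, where `x` beats `y` iff `x - y` is a square, `paleyPick true` picks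
the winner of a pair and `paleyPick false` the loser; on a singleton both give its element. -/
noncomputable def paleyPick (b : Bool) (A : Finset F) : F :=
  ∑ x ∈ A, if ∀ y ∈ A, y ≠ x → (IsSquare (x - y) ↔ b) then x else 0

theorem paleyPick_singleton (b : Bool) (x : F) : paleyPick b {x} = x := by
  simp [paleyPick]

theorem paleyPick_pair [Fintype F] (h : ¬IsSquare (-1 : F)) (b : Bool) {x y : F} (hxy : x ≠ y) :
    paleyPick b {x, y} = if (IsSquare (x - y) ↔ b) then x else y := by
  have hyx := isSquare_sub_comm_iff_not h hxy
  rw [paleyPick, sum_pair hxy]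
  by_cases hs : IsSquare (x - y) <;> cases b <;> simp [hs, hyx, hxy, hxy.symm]

theorem add_paleyPick_pair_sub [Fintype F] (h : ¬IsSquare (-1 : F)) (b : Bool) {x u : F}
    (hxu : x ≠ u) :
    x + paleyPick b {x, u} - 2 * u = (if (IsSquare (x - u) ↔ b) then 2 else 1) * (x - u) := by
  rw [paleyPick_pair h b hxu]
  split_ifs <;> ring

theorem add_paleyPick_pair_ne [Fintype F] (h : ¬IsSquare (-1 : F)) (b : Bool) {x u : F}
    (hxu : x ≠ u) : x + paleyPick b {x, u} ≠ 2 * u := by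
  rw [← sub_ne_zero, add_paleyPick_pair_sub h b hxu]
  refine mul_ne_zero ?_ (sub_ne_zero.2 hxu)
  split_ifs
  exacts [two_ne_zero_of_not_isSquare_neg_one h, one_ne_zero]

theorem injOn_add_paleyPick_pair [Fintype F] (h1 : ¬IsSquare (-1 : F)) (h2 : IsSquare (2 : F))
    (b : Bool) (u : F) : Set.InjOn (fun x ↦ x + paleyPick b {x, u}) {u}ᶜ := by
  intro x hx x' hx' heq
  -- `m x ∈ {1, 2}` is a nonzero square, so `m x * (x - u)` has the square class of `x - u`,
  -- and that class determines `m x`.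
  set m : F → F := fun x ↦ if (IsSquare (x - u) ↔ b) then 2 else 1 with hm
  have hm_sq (x : F) : IsSquare (m x) ∧ m x ≠ 0 := by
    simp only [hm]
    split_ifs
    exacts [⟨h2, two_ne_zero_of_not_isSquare_neg_one h1⟩, ⟨IsSquare.one, one_ne_zero⟩]
  have hval : m x * (x - u) = m x' * (x' - u) := by
    rw [← add_paleyPick_pair_sub h1 b hx, ← add_paleyPick_pair_sub h1 b hx']
    exact congrArg (· - 2 * u) heq
  have hclass : IsSquare (x - u) ↔ IsSquare (x' - u) := by
    rw [← isSquare_mul_iff_of_isSquare (hm_sq x).1 (hm_sq x).2, hval,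
      isSquare_mul_iff_of_isSquare (hm_sq x').1 (hm_sq x').2]
  have hmm : m x = m x' := by simp only [hm, hclass]
  rw [hmm] at hval
  exact sub_left_injective (mul_left_cancel₀ (hm_sq x').2 hval)

noncomputable def paleyColor (s : Finset (F ⊕ Bool)) : F :=
  ∑ x ∈ s.toLeft, x + ∑ b ∈ s.toRight, paleyPick b s.toLeft

open Sum

theorem paleyColor_inl_inl_inl {x u v : F} (hxu : x ≠ u) (hxv : x ≠ v) (huv : u ≠ v) :
    paleyColor {inl x, inl u, inl v} = x + u + v := by
  simp [paleyColor, sum_insert, hxu, hxv, sum_pair huv, add_assoc]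

theorem paleyColor_inl_inl_inr {x u : F} (b : Bool) (hxu : x ≠ u) :
    paleyColor {inl x, inl u, inr b} = x + u + paleyPick b {x, u} := by
  simp [paleyColor, sum_pair hxu]

theorem paleyColor_inl_inr_inr (x : F) {b b' : Bool} (hb : b ≠ b') :
    paleyColor {inl x, inr b, inr b'} = 3 * x := by
  simp [paleyColor, sum_pair hb, paleyPick_singleton]
  ring

theorem paleyColor_inr_inl_inl (b : Bool) {u v : F} (huv : u ≠ v) :
    paleyColor {inr b, inl u, inl v} = u + v + paleyPick b {u, v} := by
  simp [paleyColor, sum_pair huv]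

theorem paleyColor_inr_inl_inr {b b' : Bool} (u : F) (hb : b' ≠ b) :
    paleyColor {inr b', inl u, inr b} = 3 * u := by
  simp [paleyColor, sum_pair hb, paleyPick_singleton]
  ring

theorem paleyPick_pair_eq_or [Fintype F] (h : ¬IsSquare (-1 : F)) (b : Bool) {u v : F}
    (huv : u ≠ v) : paleyPick b {u, v} = u ∨ paleyPick b {u, v} = v := by
  rw [paleyPick_pair h b huv]
  split_ifs <;> simp

theorem paleyPick_pair_injective [Fintype F] (h : ¬IsSquare (-1 : F)) {u v : F} (huv : u ≠ v) :
    Function.Injective fun b ↦ paleyPick b {u, v} := by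
  intro b b' hbb
  simp only [paleyPick_pair h _ huv] at hbb
  cases b <;> cases b' <;> by_cases hs : IsSquare (u - v) <;> simp_all

theorem injOn_paleyColor_insert_inr_inr (h3 : (3 : F) ≠ 0) {b b' : Bool} (hb : b ≠ b') :
    Set.InjOn (fun a ↦ paleyColor (insert a ({inr b, inr b'} : Finset (F ⊕ Bool))))
      (↑({inr b, inr b'} : Finset (F ⊕ Bool)))ᶜ := by
  have hmem (c : Bool) : inr c ∈ ({inr b, inr b'} : Finset (F ⊕ Bool)) := by
    cases b <;> cases b' <;> cases c <;> simp_all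
  rintro (x | c) hx (x' | c') hx' h
  · beta_reduce at h
    rw [paleyColor_inl_inr_inr x hb, paleyColor_inl_inr_inr x' hb] at h
    rw [mul_left_cancel₀ h3 h]
  · exact absurd (hmem c') hx'
  · exact absurd (hmem c) hx
  · exact absurd (hmem c) hx

variable [Fintype F] (h1 : ¬IsSquare (-1 : F))
include h1

theorem injOn_paleyColor_insert_inl_inl {u v : F} (huv : u ≠ v) :
    Set.InjOn (fun a ↦ paleyColor (insert a {inl u, inl v}))
      (↑({inl u, inl v} : Finset (F ⊕ Bool)))ᶜ := by
  rintro (x | b) hx (x' | b') hx' h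
  all_goals simp only [Set.mem_compl_iff, mem_coe, mem_insert, mem_singleton, inl.injEq,
    reduceCtorEq, or_false, not_or] at hx hx' h
  · rw [paleyColor_inl_inl_inl hx.1 hx.2 huv, paleyColor_inl_inl_inl hx'.1 hx'.2 huv] at h
    rw [add_left_inj, add_left_inj] at h
    rw [h]
  · rw [paleyColor_inl_inl_inl hx.1 hx.2 huv, paleyColor_inr_inl_inl b' huv] at h
    rcases paleyPick_pair_eq_or h1 b' huv with hp | hp <;> rw [hp] at h
    exacts [absurd (by linear_combination h) hx.1, absurd (by linear_combination h) hx.2]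
  · rw [paleyColor_inl_inl_inl hx'.1 hx'.2 huv, paleyColor_inr_inl_inl b huv] at h
    rcases paleyPick_pair_eq_or h1 b huv with hp | hp <;> rw [hp] at h
    exacts [absurd (by linear_combination -h) hx'.1, absurd (by linear_combination -h) hx'.2]
  · rw [paleyColor_inr_inl_inl b huv, paleyColor_inr_inl_inl b' huv, add_right_inj] at h
    rw [paleyPick_pair_injective h1 huv h]

theorem injOn_paleyColor_insert_inl_inr (h2 : IsSquare (2 : F)) (u : F) (b : Bool) :
    Set.InjOn (fun a ↦ paleyColor (insert a ({inl u, inr b} : Finset (F ⊕ Bool))))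
      (↑({inl u, inr b} : Finset (F ⊕ Bool)))ᶜ := by
  have hne {x : F} (hxu : x ≠ u) : x + u + paleyPick b {x, u} ≠ 3 * u := by
    intro h
    exact add_paleyPick_pair_ne h1 b hxu (by linear_combination h)
  rintro (x | b') hx (x' | b'') hx' h
  all_goals simp only [Set.mem_compl_iff, mem_coe, mem_insert, mem_singleton, inl.injEq,
    inr.injEq, reduceCtorEq, or_false, false_or] at hx hx' h
  · rw [paleyColor_inl_inl_inr b hx, paleyColor_inl_inl_inr b hx', add_right_comm,
      add_right_comm x', add_left_inj] at h
    rw [injOn_add_paleyPick_pair h1 h2 b u hx hx' h]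
  · rw [paleyColor_inl_inl_inr b hx, paleyColor_inr_inl_inr u hx'] at h
    exact absurd h (hne hx)
  · rw [paleyColor_inr_inl_inr u hx, paleyColor_inl_inl_inr b hx'] at h
    exact absurd h.symm (hne hx')
  · cases b <;> cases b' <;> cases b'' <;> simp_all

theorem injOn_paleyColor_insert (h2 : IsSquare (2 : F)) (h3 : (3 : F) ≠ 0)
    {P : Finset (F ⊕ Bool)} (hP : #P = 2) :
    Set.InjOn (fun a ↦ paleyColor (insert a P)) (↑P)ᶜ := by
  obtain ⟨x, y, hxy, rfl⟩ := card_eq_two.1 hP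
  rcases x with u | b <;> rcases y with v | b'
  · exact injOn_paleyColor_insert_inl_inl h1 (by simpa using hxy)
  · exact injOn_paleyColor_insert_inl_inr h1 h2 u b'
  · rw [pair_comm]
    exact injOn_paleyColor_insert_inl_inr h1 h2 v b
  · exact injOn_paleyColor_insert_inr_inr h3 (by simpa using hxy)

theorem knGraph_colorable_card_add_two (h2 : IsSquare (2 : F)) (h3 : (3 : F) ≠ 0) :
    (knGraph (Fintype.card F + 2)).Colorable (Fintype.card F) :=
  knGraph_colorable_of_injOn (Fintype.equivOfCardEq (by simp)) paleyColor
    fun _ hP ↦ injOn_paleyColor_insert h1 h2 h3 hP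

end Paley

theorem knGraph_chromaticNumber_card_add_two {F : Type*} [Field F] [Fintype F]
    (h1 : ¬IsSquare (-1 : F)) (h2 : IsSquare (2 : F)) (h3 : (3 : F) ≠ 0) :
    (knGraph (Fintype.card F + 2)).chromaticNumber = Fintype.card F := by
  refine le_antisymm (knGraph_colorable_card_add_two h1 h2 h3).chromaticNumber_le
    (SimpleGraph.le_chromaticNumber_iff_colorable.2 fun m hm ↦ ?_)
  have := knGraph_sub_two_le_of_colorable hm
  exact_mod_cast (by omega : Fintype.card F ≤ m)

theorem chromatic_number_eq_general (k p : ℕ) (hp8 : p = 8 * k - 1)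
    (hp : p.Prime) : (knGraph (p + 2)).chromaticNumber = p := by
  have : Fact p.Prime := ⟨hp⟩
  have h7 : p % 8 = 7 := by
    have := hp.two_le
    omega
  have h1 : ¬IsSquare (-1 : ZMod p) := by
    rw [ZMod.exists_sq_eq_neg_one_iff]
    omega
  have h2 : IsSquare (2 : ZMod p) := (ZMod.exists_sq_eq_two_iff (by omega)).2 (Or.inr h7)
  have h3 : ((3 : ℕ) : ZMod p) ≠ 0 := by
    rw [Ne, ZMod.natCast_eq_zero_iff]
    intro h
    have := Nat.le_of_dvd three_pos h
    omega
  have h := knGraph_chromaticNumber_card_add_two h1 h2 (by exact_mod_cast h3)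
  rwa [ZMod.card] at h

theorem chromatic_number_eq (k p : ℕ) (hk : 0 < k) (hp8 : p = 8 * k - 1)
    (hp : p.Prime) : (knGraph (p + 2)).chromaticNumber = p :=
  chromatic_number_eq_general k p hp8 hp
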